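/- Let Φ be an irreducible root system with highest root β, and let ν be a dominant cocharacter (i.e. ⟨ν, α⟩ ≥ 0 for all positive roots α) such that ⟨ν, α⟩ ∈ {0, 1, 2} for all positive roots α and such that there is exactly one positive root α with ⟨ν, α⟩ = 2. Then ⟨ν, β⟩ = 2 and ν = β∨. -/

import Mathlib

/-!
Since `β - α₀` is positive for the root `α₀` of value 2, `ν β = 2`, and `β` is the only root of
value 2. Reflecting `β` in a root `a` gives a root of value `2 - ⟨β, a∨⟩ ν a`, which cannot exceed
2; hence `⟪β, a⟫ ν a > 0` unless `⟪β, a⟫ = 0`. So roots `a ≠ β` with `⟪β, a⟫ > 0` have value 1,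
and reflecting `a` in `β` then shows `⟨a, β∨⟩ = 1`. For a root `d ⊥ β`, irreducibility provides a
root `e` with `⟪β, e⟫ > 0` and `⟪d, e⟫ ≠ 0`; both `e` and its reflection in `d` have value 1, which
forces `ν d = 0`. Thus `ν` agrees with `β∨` on `Φ`, which spans `V`.
-/

open RealInnerProductSpace

lemma nonneg_of_mem_closure {M F : Type*} [AddMonoid M] [FunLike F M ℝ] [AddMonoidHomClass F M ℝ]
    (f : F) {Δ : Set M} (hΔ : ∀ x ∈ Δ, 0 ≤ f x) {x : M} (hx : x ∈ AddSubmonoid.closure Δ) :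
    0 ≤ f x := by
  induction hx using AddSubmonoid.closure_induction with
  | mem y hy => exact hΔ y hy
  | zero => simp
  | add a b _ _ ha hb => rw [map_add]; exact add_nonneg ha hb

section RootSystem

variable {V : Type*} [NormedAddCommGroup V] [InnerProductSpace ℝ V]

noncomputable def reflect (α x : V) : V := x - (2 * ⟪x, α⟫ / ⟪α, α⟫) • α

lemma inner_reflect (α x v : V) :
    ⟪v, reflect α x⟫ = ⟪v, x⟫ - 2 * ⟪x, α⟫ / ⟪α, α⟫ * ⟪v, α⟫ := by
  rw [reflect, inner_sub_right, real_inner_smul_right]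

lemma inner_reflect_of_inner_eq_zero {α v : V} (h : ⟪v, α⟫ = 0) (x : V) :
    ⟪v, reflect α x⟫ = ⟪v, x⟫ := by
  rw [inner_reflect, h, mul_zero, sub_zero]

lemma inner_reflect_same {α : V} (hα : α ≠ 0) (x : V) : ⟪α, reflect α x⟫ = -⟪α, x⟫ := by
  have := real_inner_self_pos.2 hα
  rw [inner_reflect, real_inner_comm x]
  field_simp
  ring

lemma reflect_self {α : V} (hα : α ≠ 0) : reflect α α = -α := by
  rw [reflect, mul_div_assoc, div_self (inner_self_ne_zero.2 hα), mul_one]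
  module

lemma reflect_eq_self_iff {α : V} (hα : α ≠ 0) {x : V} : reflect α x = x ↔ ⟪x, α⟫ = 0 := by
  have := real_inner_self_pos.2 hα
  rw [reflect, sub_eq_self, smul_eq_zero, or_iff_left hα]
  constructor
  · intro h; field_simp at h; linarith
  · intro h; simp [h]

lemma map_reflect (f : V →ₗ[ℝ] ℝ) (α x : V) :
    f (reflect α x) = f x - 2 * ⟪x, α⟫ / ⟪α, α⟫ * f α := by
  rw [reflect, map_sub, map_smul, smul_eq_mul]

lemma neg_mem_of_reflect_mem {Φ : Set V} (h0 : (0 : V) ∉ Φ)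
    (hrefl : ∀ α ∈ Φ, ∀ x ∈ Φ, reflect α x ∈ Φ) {α : V} (hα : α ∈ Φ) : -α ∈ Φ := by
  rw [← reflect_self (ne_of_mem_of_not_mem hα h0)]
  exact hrefl α hα α hα

lemma subset_span_inner_ne_zero {Φ : Set V} (hrefl : ∀ α ∈ Φ, ∀ x ∈ Φ, reflect α x ∈ Φ)
    (hirr : ∀ Φ₁ Φ₂ : Set V, Φ = Φ₁ ∪ Φ₂ →
      (∀ α ∈ Φ₁, ∀ β ∈ Φ₂, ⟪α, β⟫ = 0) → Φ₁ = ∅ ∨ Φ₂ = ∅)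
    {v : V} (hv : ∃ e ∈ Φ, ⟪v, e⟫ ≠ 0) :
    Φ ⊆ Submodule.span ℝ {e | e ∈ Φ ∧ ⟪v, e⟫ ≠ 0} := by
  set W := Submodule.span ℝ {e | e ∈ Φ ∧ ⟪v, e⟫ ≠ 0}
  have orth_of_not_mem : ∀ z ∈ Φ, z ∉ W → W ≤ (ℝ ∙ z)ᗮ := by
    refine fun z hz hzW => Submodule.span_le.2 fun e ⟨he, hve⟩ => ?_
    rw [SetLike.mem_coe, Submodule.mem_orthogonal_singleton_iff_inner_right]
    by_contra hze
    have hvz : ⟪v, z⟫ = 0 := by_contra fun h => hzW (Submodule.subset_span ⟨hz, h⟩)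
    have hz0 : z ≠ 0 := by rintro rfl; exact hzW W.zero_mem
    -- `e` and its reflection in `z` both lie in `W`, and they differ by a nonzero multiple of `z`
    have hrefl_mem : reflect z e ∈ W := Submodule.subset_span
      ⟨hrefl z hz e he, by rwa [inner_reflect_of_inner_eq_zero hvz]⟩
    have hc : 2 * ⟪e, z⟫ / ⟪z, z⟫ ≠ 0 := by
      rw [real_inner_comm] at hze
      exact div_ne_zero (mul_ne_zero two_ne_zero hze) (inner_self_ne_zero.2 hz0)
    have := W.sub_mem (Submodule.subset_span ⟨he, hve⟩) hrefl_mem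
    rw [reflect, sub_sub_cancel] at this
    exact hzW ((W.smul_mem_iff hc).1 this)
  obtain ⟨e, he, hve⟩ := hv
  rcases hirr (Φ ∩ W) (Φ \ W) (Set.inter_union_sdiff Φ W).symm
      (fun w ⟨_, hw⟩ z ⟨hz, hzW⟩ => by
        rw [real_inner_comm]
        exact Submodule.mem_orthogonal_singleton_iff_inner_right.1
          (orth_of_not_mem z hz hzW hw)) with h | h
  · exact absurd h (Set.nonempty_iff_ne_empty.1 ⟨e, he, Submodule.subset_span ⟨he, hve⟩⟩)
  · exact Set.sdiff_eq_empty.1 h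

lemma exists_inner_ne_zero_of_irreducible {Φ : Set V} (hrefl : ∀ α ∈ Φ, ∀ x ∈ Φ, reflect α x ∈ Φ)
    (hirr : ∀ Φ₁ Φ₂ : Set V, Φ = Φ₁ ∪ Φ₂ →
      (∀ α ∈ Φ₁, ∀ β ∈ Φ₂, ⟪α, β⟫ = 0) → Φ₁ = ∅ ∨ Φ₂ = ∅)
    {v : V} (hv : ∃ e ∈ Φ, ⟪v, e⟫ ≠ 0) {d : V}
    (hd : d ∈ Φ) (hd0 : d ≠ 0) : ∃ e ∈ Φ, ⟪v, e⟫ ≠ 0 ∧ ⟪d, e⟫ ≠ 0 := by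
  by_contra! h
  have : Submodule.span ℝ {e | e ∈ Φ ∧ ⟪v, e⟫ ≠ 0} ≤ (ℝ ∙ d)ᗮ := Submodule.span_le.2
    fun e he => Submodule.mem_orthogonal_singleton_iff_inner_right.2 (h e he.1 he.2)
  exact hd0 (inner_self_eq_zero.1 (Submodule.mem_orthogonal_singleton_iff_inner_right.1
    (this (subset_span_inner_ne_zero hrefl hirr hv hd))))

variable {Φ : Set V} {β : V} {ν : V →ₗ[ℝ] ℝ}

lemma inner_eq_zero_of_inner_mul_apply_nonpos (h0 : (0 : V) ∉ Φ)
    (hrefl : ∀ α ∈ Φ, ∀ x ∈ Φ, reflect α x ∈ Φ) (hβ : β ∈ Φ) (hνβ : ν β = 2)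
    (hle : ∀ γ ∈ Φ, ν γ ≤ 2) (htwo : ∀ γ ∈ Φ, ν γ = 2 → γ = β)
    {a : V} (ha : a ∈ Φ) (h : ⟪β, a⟫ * ν a ≤ 0) : ⟪β, a⟫ = 0 := by
  have ha0 : a ≠ 0 := ne_of_mem_of_not_mem ha h0
  have hmem := hrefl a ha β hβ
  have hge : 2 ≤ ν (reflect a β) := by
    rw [map_reflect, hνβ, mul_div_right_comm, mul_assoc]
    have := div_pos two_pos (real_inner_self_pos.2 ha0)
    linarith [mul_nonpos_of_nonneg_of_nonpos this.le h]
  exact (reflect_eq_self_iff ha0).1 (htwo _ hmem (le_antisymm (hle _ hmem) hge))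

lemma apply_eq_one_of_inner_pos (h0 : (0 : V) ∉ Φ)
    (hrefl : ∀ α ∈ Φ, ∀ x ∈ Φ, reflect α x ∈ Φ) (hβ : β ∈ Φ) (hνβ : ν β = 2)
    (hle : ∀ γ ∈ Φ, ν γ ≤ 2) (htwo : ∀ γ ∈ Φ, ν γ = 2 → γ = β)
    (hone : ∀ γ ∈ Φ, 0 < ν γ → γ ≠ β → ν γ = 1)
    {a : V} (ha : a ∈ Φ) (hpos : 0 < ⟪β, a⟫) (hne : a ≠ β) : ν a = 1 := by
  refine hone a ha (lt_of_not_ge fun hν => hpos.ne' ?_) hne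
  exact inner_eq_zero_of_inner_mul_apply_nonpos h0 hrefl hβ hνβ hle htwo ha
    (mul_nonpos_of_nonneg_of_nonpos hpos.le hν)

lemma two_mul_inner_div_eq_one_of_inner_pos (h0 : (0 : V) ∉ Φ)
    (hcrys : ∀ α ∈ Φ, ∀ β ∈ Φ, ∃ n : ℤ, 2 * ⟪α, β⟫ / ⟪β, β⟫ = (n : ℝ))
    (hrefl : ∀ α ∈ Φ, ∀ x ∈ Φ, reflect α x ∈ Φ) (hβ : β ∈ Φ) (hνβ : ν β = 2)
    (hle : ∀ γ ∈ Φ, ν γ ≤ 2) (htwo : ∀ γ ∈ Φ, ν γ = 2 → γ = β)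
    (hone : ∀ γ ∈ Φ, 0 < ν γ → γ ≠ β → ν γ = 1)
    {a : V} (ha : a ∈ Φ) (hpos : 0 < ⟪β, a⟫) (hne : a ≠ β) : 2 * ⟪β, a⟫ / ⟪β, β⟫ = 1 := by
  obtain ⟨n, hn⟩ := hcrys a ha β hβ
  have hn_pos : (0 : ℝ) < n := hn ▸ div_pos (by rw [real_inner_comm]; linarith)
    (real_inner_self_pos.2 (ne_of_mem_of_not_mem hβ h0))
  -- `n • β - a = -(reflect β a)` is a root of ν-value `2 n - 1`, which is at most 2
  have hle' := hle _ (neg_mem_of_reflect_mem h0 hrefl (hrefl β hβ a ha))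
  rw [map_neg, map_reflect, hn, hνβ, apply_eq_one_of_inner_pos h0 hrefl hβ hνβ hle htwo hone ha
    hpos hne] at hle'
  obtain rfl : n = 1 := by
    have : n < 2 := by exact_mod_cast (by linarith : (n : ℝ) < 2)
    have : 0 < n := by exact_mod_cast hn_pos
    omega
  rw [real_inner_comm, hn, Int.cast_one]

lemma apply_eq_zero_of_inner_eq_zero (h0 : (0 : V) ∉ Φ)
    (hrefl : ∀ α ∈ Φ, ∀ x ∈ Φ, reflect α x ∈ Φ)
    (hirr : ∀ Φ₁ Φ₂ : Set V, Φ = Φ₁ ∪ Φ₂ →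
      (∀ α ∈ Φ₁, ∀ β ∈ Φ₂, ⟪α, β⟫ = 0) → Φ₁ = ∅ ∨ Φ₂ = ∅)
    (hβ : β ∈ Φ) (hνβ : ν β = 2)
    (hle : ∀ γ ∈ Φ, ν γ ≤ 2) (htwo : ∀ γ ∈ Φ, ν γ = 2 → γ = β)
    (hone : ∀ γ ∈ Φ, 0 < ν γ → γ ≠ β → ν γ = 1)
    {d : V} (hd : d ∈ Φ) (hβd : ⟪β, d⟫ = 0) : ν d = 0 := by
  have hd0 : d ≠ 0 := ne_of_mem_of_not_mem hd h0
  have hdβ : ⟪d, β⟫ = 0 := by rwa [real_inner_comm]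
  obtain ⟨e, he, hβe, hde⟩ : ∃ e ∈ Φ, 0 < ⟪β, e⟫ ∧ ⟪d, e⟫ ≠ 0 := by
    obtain ⟨e, he, hβe, hde⟩ := exists_inner_ne_zero_of_irreducible hrefl hirr
      ⟨β, hβ, inner_self_ne_zero.2 (ne_of_mem_of_not_mem hβ h0)⟩ hd hd0
    rcases hβe.lt_or_gt with hβe | hβe
    · exact ⟨-e, neg_mem_of_reflect_mem h0 hrefl he, by rw [inner_neg_right]; linarith,
        by rwa [inner_neg_right, neg_ne_zero]⟩
    · exact ⟨e, he, hβe, hde⟩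
  -- `e` and its reflection in `d` both have ν-value 1 and differ by a nonzero multiple of `d`
  have hνe := apply_eq_one_of_inner_pos h0 hrefl hβ hνβ hle htwo hone he hβe
    (by rintro rfl; exact hde hdβ)
  have hνη := apply_eq_one_of_inner_pos h0 hrefl hβ hνβ hle htwo hone (hrefl d hd e he)
    (by rwa [inner_reflect_of_inner_eq_zero hβd])
    (fun h => hde (by rw [← neg_eq_zero, ← inner_reflect_same hd0, h, hdβ]))
  rw [map_reflect, hνe, sub_eq_self, mul_eq_zero] at hνη
  refine hνη.resolve_left (div_ne_zero (mul_ne_zero two_ne_zero ?_) (inner_self_ne_zero.2 hd0))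
  rwa [real_inner_comm]

lemma apply_eq_two_mul_inner_div (h0 : (0 : V) ∉ Φ)
    (hcrys : ∀ α ∈ Φ, ∀ β ∈ Φ, ∃ n : ℤ, 2 * ⟪α, β⟫ / ⟪β, β⟫ = (n : ℝ))
    (hrefl : ∀ α ∈ Φ, ∀ x ∈ Φ, reflect α x ∈ Φ)
    (hirr : ∀ Φ₁ Φ₂ : Set V, Φ = Φ₁ ∪ Φ₂ →
      (∀ α ∈ Φ₁, ∀ β ∈ Φ₂, ⟪α, β⟫ = 0) → Φ₁ = ∅ ∨ Φ₂ = ∅)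
    (hβ : β ∈ Φ) (hνβ : ν β = 2)
    (hle : ∀ γ ∈ Φ, ν γ ≤ 2) (htwo : ∀ γ ∈ Φ, ν γ = 2 → γ = β)
    (hone : ∀ γ ∈ Φ, 0 < ν γ → γ ≠ β → ν γ = 1)
    {a : V} (ha : a ∈ Φ) : ν a = 2 * ⟪β, a⟫ / ⟪β, β⟫ := by
  have of_pos : ∀ a ∈ Φ, 0 < ⟪β, a⟫ → ν a = 2 * ⟪β, a⟫ / ⟪β, β⟫ := by
    intro a ha hpos
    by_cases hne : a = β
    · subst hne
      rw [hνβ, mul_div_assoc, div_self hpos.ne', mul_one]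
    · rw [apply_eq_one_of_inner_pos h0 hrefl hβ hνβ hle htwo hone ha hpos hne,
        two_mul_inner_div_eq_one_of_inner_pos h0 hcrys hrefl hβ hνβ hle htwo hone ha hpos hne]
  rcases lt_trichotomy ⟪β, a⟫ 0 with hneg | hzero | hpos
  · have := of_pos (-a) (neg_mem_of_reflect_mem h0 hrefl ha) (by rw [inner_neg_right]; linarith)
    rwa [map_neg, inner_neg_right, mul_neg, neg_div, neg_inj] at this
  · rw [apply_eq_zero_of_inner_eq_zero h0 hrefl hirr hβ hνβ hle htwo hone ha hzero, hzero,
      mul_zero, zero_div]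
  · exact of_pos a ha hpos

variable {Δ : Set V}

lemma mem_closure_of_apply_pos
    (hposneg : ∀ α ∈ Φ, α ∈ AddSubmonoid.closure Δ ∨ -α ∈ AddSubmonoid.closure Δ)
    (hν0 : ∀ x ∈ AddSubmonoid.closure Δ, 0 ≤ ν x) {γ : V} (hγ : γ ∈ Φ) (hpos : 0 < ν γ) :
    γ ∈ AddSubmonoid.closure Δ :=
  (hposneg γ hγ).resolve_right fun h => by
    have := hν0 _ h
    rw [map_neg] at this
    linarith

lemma apply_le_two
    (hposneg : ∀ α ∈ Φ, α ∈ AddSubmonoid.closure Δ ∨ -α ∈ AddSubmonoid.closure Δ)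
    (hν0 : ∀ x ∈ AddSubmonoid.closure Δ, 0 ≤ ν x)
    (hval : ∀ α ∈ Φ, α ∈ AddSubmonoid.closure Δ → ν α = 0 ∨ ν α = 1 ∨ ν α = 2)
    {γ : V} (hγ : γ ∈ Φ) : ν γ ≤ 2 := by
  rcases le_or_gt (ν γ) 0 with h | h
  · linarith
  · rcases hval γ hγ (mem_closure_of_apply_pos hposneg hν0 hγ h) with h | h | h <;> linarith

lemma apply_eq_one_of_apply_pos
    (hposneg : ∀ α ∈ Φ, α ∈ AddSubmonoid.closure Δ ∨ -α ∈ AddSubmonoid.closure Δ)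
    (hν0 : ∀ x ∈ AddSubmonoid.closure Δ, 0 ≤ ν x)
    (hval : ∀ α ∈ Φ, α ∈ AddSubmonoid.closure Δ → ν α = 0 ∨ ν α = 1 ∨ ν α = 2)
    (htwo : ∀ γ ∈ Φ, ν γ = 2 → γ = β) {γ : V} (hγ : γ ∈ Φ) (hpos : 0 < ν γ) (hne : γ ≠ β) :
    ν γ = 1 := by
  rcases hval γ hγ (mem_closure_of_apply_pos hposneg hν0 hγ hpos) with h | h | h
  · linarith
  · exact h
  · exact absurd (htwo γ hγ h) hne

end RootSystem

theorem stmt_3_general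
    {V : Type*} [NormedAddCommGroup V] [InnerProductSpace ℝ V]
    (Φ : Set V)
    (h0 : (0 : V) ∉ Φ)
    (hspan : Submodule.span ℝ Φ = ⊤)
    (hcrys : ∀ α ∈ Φ, ∀ β ∈ Φ, ∃ n : ℤ, 2 * ⟪α, β⟫ / ⟪β, β⟫ = (n : ℝ))
    (hrefl : ∀ α ∈ Φ, ∀ β ∈ Φ, β - (2 * ⟪β, α⟫ / ⟪α, α⟫) • α ∈ Φ)
    (hirr : ∀ Φ₁ Φ₂ : Set V, Φ = Φ₁ ∪ Φ₂ →
      (∀ α ∈ Φ₁, ∀ β ∈ Φ₂, ⟪α, β⟫ = 0) → Φ₁ = ∅ ∨ Φ₂ = ∅)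
    (Δ : Set V) (hΔ : Δ ⊆ Φ)
    (hposneg : ∀ α ∈ Φ, α ∈ AddSubmonoid.closure Δ ∨ -α ∈ AddSubmonoid.closure Δ)
    {β : V} (hβ : β ∈ Φ) (hβpos : β ∈ AddSubmonoid.closure Δ)
    (hhighest : ∀ α ∈ Φ, β - α ∈ AddSubmonoid.closure Δ)
    (ν : V →ₗ[ℝ] ℝ)
    (hdom : ∀ α ∈ Φ, α ∈ AddSubmonoid.closure Δ → 0 ≤ ν α)
    (hval : ∀ α ∈ Φ, α ∈ AddSubmonoid.closure Δ →
      ν α = 0 ∨ ν α = 1 ∨ ν α = 2)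
    (huniq : ∃! α : V, α ∈ Φ ∧ α ∈ AddSubmonoid.closure Δ ∧ ν α = 2) :
    ν β = 2 ∧ ∀ x : V, ν x = 2 * ⟪β, x⟫ / ⟪β, β⟫ := by
  have hν0 : ∀ x ∈ AddSubmonoid.closure Δ, 0 ≤ ν x := fun _ =>
    nonneg_of_mem_closure ν fun y hy => hdom y (hΔ hy) (AddSubmonoid.subset_closure hy)
  have hle : ∀ γ ∈ Φ, ν γ ≤ 2 := fun _ => apply_le_two hposneg hν0 hval
  have hνβ : ν β = 2 := by
    obtain ⟨α, ⟨hα, -, hνα⟩, -⟩ := huniq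
    have := hν0 _ (hhighest α hα)
    rw [map_sub, hνα] at this
    linarith [hle β hβ]
  have htwo : ∀ γ ∈ Φ, ν γ = 2 → γ = β := fun γ hγ h => huniq.unique
    ⟨hγ, mem_closure_of_apply_pos hposneg hν0 hγ (by linarith), h⟩ ⟨hβ, hβpos, hνβ⟩
  have hone : ∀ γ ∈ Φ, 0 < ν γ → γ ≠ β → ν γ = 1 := fun _ =>
    apply_eq_one_of_apply_pos hposneg hν0 hval htwo
  have hcoroot : ν = (2 / ⟪β, β⟫) • innerₗ V β := LinearMap.ext_on hspan fun a ha => by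
    simpa [div_mul_eq_mul_div] using
      apply_eq_two_mul_inner_div h0 hcrys hrefl hirr hβ hνβ hle htwo hone ha
  refine ⟨hνβ, fun x => ?_⟩
  simp [hcoroot, div_mul_eq_mul_div]

/-- If `ν` is a dominant cocharacter of an irreducible root system `Φ` taking only the
values `0, 1, 2` on positive roots, with exactly one positive root of value `2`, then
`ν(β) = 2` for the highest root `β` and `ν = β∨` (viewed as the linear functional
`x ↦ 2(β,x)/(β,β)`). -/
theorem stmt_3
    {V : Type*} [NormedAddCommGroup V] [InnerProductSpace ℝ V] [FiniteDimensional ℝ V]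
    (Φ : Set V)
    (hfin : Φ.Finite)
    (h0 : (0 : V) ∉ Φ)
    (hspan : Submodule.span ℝ Φ = ⊤)
    (hcrys : ∀ α ∈ Φ, ∀ β ∈ Φ, ∃ n : ℤ, 2 * ⟪α, β⟫ / ⟪β, β⟫ = (n : ℝ))
    (hrefl : ∀ α ∈ Φ, ∀ β ∈ Φ, β - (2 * ⟪β, α⟫ / ⟪α, α⟫) • α ∈ Φ)
    (hred : ∀ α ∈ Φ, ∀ t : ℝ, t • α ∈ Φ → t = 1 ∨ t = -1)
    (hirr : ∀ Φ₁ Φ₂ : Set V, Φ = Φ₁ ∪ Φ₂ →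
      (∀ α ∈ Φ₁, ∀ β ∈ Φ₂, ⟪α, β⟫ = 0) → Φ₁ = ∅ ∨ Φ₂ = ∅)
    (Δ : Set V) (hΔ : Δ ⊆ Φ)
    (hposneg : ∀ α ∈ Φ, α ∈ AddSubmonoid.closure Δ ∨ -α ∈ AddSubmonoid.closure Δ)
    {β : V} (hβ : β ∈ Φ) (hβpos : β ∈ AddSubmonoid.closure Δ)
    (hhighest : ∀ α ∈ Φ, β - α ∈ AddSubmonoid.closure Δ)
    (ν : V →ₗ[ℝ] ℝ)
    (hint : ∀ α ∈ Φ, ∃ n : ℤ, ν α = (n : ℝ))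
    (hdom : ∀ α ∈ Φ, α ∈ AddSubmonoid.closure Δ → 0 ≤ ν α)
    (hval : ∀ α ∈ Φ, α ∈ AddSubmonoid.closure Δ →
      ν α = 0 ∨ ν α = 1 ∨ ν α = 2)
    (huniq : ∃! α : V, α ∈ Φ ∧ α ∈ AddSubmonoid.closure Δ ∧ ν α = 2) :
    ν β = 2 ∧ ∀ x : V, ν x = 2 * ⟪β, x⟫ / ⟪β, β⟫ :=
  stmt_3_general Φ h0 hspan hcrys hrefl hirr Δ hΔ hposneg hβ hβpos hhighest ν hdom hval huniq
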